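/- For y ∈ W^{1,2}(-1,1) with vanishing moments ∫_{-1}^{1} t^k y dt = 0 for k = 0,1,2 (m = 3), the sharp constant B_3(x) in |y(x)| ≤ B_3(x)(∫_{-1}^{1}|y'|^2)^{1/2} for x ∈ (-1,1) is B_3(x) = √(297 + 1260x^2 - 5370x^4 + 5900x^6 - 1575x^8)/(16√15). -/

import Mathlib

/-- `W12 y g` : `y` is absolutely continuous on `[-1,1]` with derivative `g ∈ L²(-1,1)`. -/
def W12 (y g : ℝ → ℝ) : Prop :=
  IntervalIntegrable g MeasureTheory.volume (-1) 1 ∧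
  IntervalIntegrable (fun t => g t ^ 2) MeasureTheory.volume (-1) 1 ∧
  ∀ t ∈ Set.Icc (-1 : ℝ) 1, y t = y (-1) + ∫ s in (-1 : ℝ)..t, g s

/-- The sharp constant `B₃(x)`. -/
noncomputable def B3 (x : ℝ) : ℝ :=
  Real.sqrt (297 + 1260 * x ^ 2 - 5370 * x ^ 4 + 5900 * x ^ 6 - 1575 * x ^ 8) /
    (16 * Real.sqrt 15)

/-!
Writing `y(t) = y(-1) + ∫_{-1}^t y'`, the point value is `y(x) = y(-1) + ∫ 1_{t ≤ x} y'(t) dt`.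
Integrating by parts against a cubic `P(x, ·)` with `P(x, 1) = 0` and `P(x, -1) = -1`, the
vanishing moments turn `∫ P(x, t) y'(t) dt` into `y(-1)`, so `y(x) = ∫ K(x, t) y'(t) dt` with
`K = 1_{t ≤ x} + P`. Adding `t² - 1` or `t³ - t` to `K(x, ·)` does not change `∫ K y'` (their
derivatives are quadratic), so the best kernel is orthogonal to both; this fixes the two free
coefficients of `P`. Cauchy–Schwarz gives `|y(x)| ≤ ‖K(x, ·)‖ ‖y'‖`, with equality for the primitive
of `K(x, ·)` normalised to have vanishing moments, whose value at `x` is `‖K(x, ·)‖² = B₃(x)²`.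
-/

open Set intervalIntegral
open MeasureTheory (volume)

theorem integral_deriv_mul_eq_of_eq_add_primitive {a b : ℝ} (hab : a ≤ b) {y g p p' : ℝ → ℝ}
    (hg : IntervalIntegrable g volume a b) (hy : ∀ t ∈ Icc a b, y t = y a + ∫ s in a..t, g s)
    (hp : ∀ t, HasDerivAt p (p' t) t) (hp' : Continuous p') :
    ∫ t in a..b, p' t * y t = p b * y b - p a * y a - ∫ t in a..b, p t * g t := by
  set G := fun t => ∫ s in a..t, g s
  have hderiv : deriv p = p' := funext fun t => (hp t).deriv
  have hp_ac : AbsolutelyContinuousOnInterval p a b :=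
    (contDiff_one_iff_deriv.2 ⟨fun t => (hp t).differentiableAt, hderiv ▸ hp'⟩).contDiffOn
      |>.absolutelyContinuousOnInterval
  have ibp := hp_ac.integral_mul_deriv_eq_deriv_mul
    (hg.absolutelyContinuousOnInterval_intervalIntegral left_mem_uIcc)
  have hG : ∫ t in a..b, p t * deriv G t = ∫ t in a..b, p t * g t := by
    refine integral_congr_ae ?_
    filter_upwards [hg.ae_hasDerivAt_integral] with t ht htab
    rw [(ht (uIoc_subset_uIcc htab) a left_mem_uIcc).deriv]
  have hGc : ContinuousOn G (uIcc a b) := continuousOn_primitive_interval' hg left_mem_uIcc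
  have hsplit : ∫ t in a..b, p' t * y t = (p b - p a) * y a + ∫ t in a..b, p' t * G t := by
    rw [integral_congr (g := fun t => p' t * y a + p' t * G t) fun t ht => by
        rw [hy t (uIcc_of_le hab ▸ ht), mul_add],
      integral_add ((hp'.intervalIntegrable a b).mul_const _)
        (ContinuousOn.intervalIntegrable (u := fun t => p' t * G t) (hp'.continuousOn.mul hGc)),
      integral_mul_const, integral_eq_sub_of_hasDerivAt (fun t _ => hp t)
        (hp'.intervalIntegrable a b)]
  rw [hsplit, hy b ⟨hab, le_rfl⟩, ← hG, ibp, hderiv]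
  simp only [G, integral_same]
  ring

theorem abs_integral_mul_le_sqrt_mul_sqrt {a b : ℝ} (hab : a ≤ b) {f g : ℝ → ℝ}
    (hf : IntervalIntegrable (fun t => f t ^ 2) volume a b)
    (hg : IntervalIntegrable (fun t => g t ^ 2) volume a b)
    (hfg : IntervalIntegrable (fun t => f t * g t) volume a b) :
    |∫ t in a..b, f t * g t| ≤ √(∫ t in a..b, f t ^ 2) * √(∫ t in a..b, g t ^ 2) := by
  have hquad (c : ℝ) : 0 ≤ (∫ t in a..b, g t ^ 2) * (c * c)
      + 2 * (∫ t in a..b, f t * g t) * c + ∫ t in a..b, f t ^ 2 := by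
    have hexp : ∫ t in a..b, (f t + c * g t) ^ 2 = (∫ t in a..b, g t ^ 2) * (c * c)
        + 2 * (∫ t in a..b, f t * g t) * c + ∫ t in a..b, f t ^ 2 := by
      rw [integral_congr (g := fun t => (c * c) * g t ^ 2 + (2 * c) * (f t * g t) + f t ^ 2)
          fun t _ => by ring,
        integral_add ((hg.const_mul _).add (hfg.const_mul _)) hf,
        integral_add (hg.const_mul _) (hfg.const_mul _), integral_const_mul, integral_const_mul]
      ring
    exact hexp ▸ integral_nonneg hab fun t _ => sq_nonneg _
  have hdiscr := discrim_le_zero hquad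
  rw [discrim] at hdiscr
  rw [← Real.sqrt_mul (integral_nonneg hab fun t _ => sq_nonneg _)]
  exact Real.abs_le_sqrt (by nlinarith)

lemma IntervalIntegrable.indicator_le {h : ℝ → ℝ} {a b : ℝ} {μ : MeasureTheory.Measure ℝ}
    (hh : IntervalIntegrable h μ a b) (x : ℝ) :
    IntervalIntegrable ({s | s ≤ x}.indicator h) μ a b :=
  intervalIntegrable_iff.2 ((intervalIntegrable_iff.1 hh).indicator measurableSet_Iic)

noncomputable def evalKernelPoly (x t : ℝ) : ℝ :=
  (t - 1) / 2 + 15 / 16 * (x - x ^ 3 / 3) * (t ^ 2 - 1)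
    + 105 / 16 * (x ^ 2 / 2 - x ^ 4 / 4 - 7 / 60) * (t ^ 3 - t)

noncomputable def evalKernel (x t : ℝ) : ℝ := {s | s ≤ x}.indicator 1 t + evalKernelPoly x t

lemma hasDerivAt_evalKernelPoly (x t : ℝ) :
    HasDerivAt (evalKernelPoly x)
      ((1 / 2 - 105 / 16 * (x ^ 2 / 2 - x ^ 4 / 4 - 7 / 60)) + 15 / 8 * (x - x ^ 3 / 3) * t
        + 315 / 16 * (x ^ 2 / 2 - x ^ 4 / 4 - 7 / 60) * t ^ 2) t := by
  refine (((((hasDerivAt_id' t).sub_const 1).div_const 2).fun_add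
    (((hasDerivAt_pow 2 t).sub_const 1).const_mul (15 / 16 * (x - x ^ 3 / 3)))).fun_add
      (((hasDerivAt_pow 3 t).fun_sub (hasDerivAt_id' t)).const_mul
        (105 / 16 * (x ^ 2 / 2 - x ^ 4 / 4 - 7 / 60)))).congr_deriv ?_
  norm_num
  ring

lemma mul_evalKernel (x : ℝ) (h : ℝ → ℝ) (t : ℝ) :
    h t * evalKernel x t = {s | s ≤ x}.indicator h t + evalKernelPoly x t * h t := by
  by_cases ht : t ≤ x <;> simp [evalKernel, ht] <;> ring

lemma intervalIntegrable_mul_evalKernel (x : ℝ) {h : ℝ → ℝ}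
    (hh : IntervalIntegrable h volume (-1) 1) :
    IntervalIntegrable (fun t => h t * evalKernel x t) volume (-1) 1 := by
  simpa only [mul_evalKernel] using
    (hh.indicator_le x).add (hh.continuousOn_mul (by unfold evalKernelPoly; fun_prop))

lemma integral_mul_evalKernel {x : ℝ} (hx : x ∈ Icc (-1 : ℝ) 1) {h : ℝ → ℝ}
    (hh : IntervalIntegrable h volume (-1) 1) :
    ∫ t in (-1 : ℝ)..1, h t * evalKernel x t
      = (∫ t in (-1 : ℝ)..x, h t) + ∫ t in (-1 : ℝ)..1, evalKernelPoly x t * h t := by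
  simp_rw [mul_evalKernel]
  rw [integral_add (hh.indicator_le x) (hh.continuousOn_mul (by unfold evalKernelPoly; fun_prop)),
    integral_indicator hx]

lemma intervalIntegrable_evalKernel (x : ℝ) :
    IntervalIntegrable (evalKernel x) volume (-1) 1 := by
  simpa using intervalIntegrable_mul_evalKernel x (h := 1) intervalIntegrable_const

lemma intervalIntegrable_evalKernel_sq (x : ℝ) :
    IntervalIntegrable (fun t => evalKernel x t ^ 2) volume (-1) 1 := by
  simpa [sq] using intervalIntegrable_mul_evalKernel x (intervalIntegrable_evalKernel x)

namespace W12

variable {y g : ℝ → ℝ}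

lemma continuousOn (hyg : W12 y g) : ContinuousOn y (Icc (-1) 1) := by
  have hG := continuousOn_primitive_interval' hyg.1 (left_mem_uIcc (a := (-1 : ℝ)) (b := 1))
  rw [uIcc_of_le (by norm_num)] at hG
  exact (continuousOn_const.add hG).congr hyg.2.2

lemma integral_pow_mul (hyg : W12 y g) (k : ℕ) :
    ∫ t in (-1 : ℝ)..1, t ^ k * y t = (1 - (-1) ^ (k + 1)) / (k + 1) * y (-1)
      - ∫ t in (-1 : ℝ)..1, (t ^ (k + 1) - 1) / (k + 1) * g t := by
  have hp (t : ℝ) : HasDerivAt (fun s : ℝ => (s ^ (k + 1) - 1) / (k + 1)) (t ^ k) t := by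
    refine (((hasDerivAt_pow (k + 1) t).sub_const 1).div_const _).congr_deriv ?_
    field_simp
    push_cast
    ring
  rw [integral_deriv_mul_eq_of_eq_add_primitive (by norm_num) hyg.1 hyg.2.2 hp (by fun_prop)]
  ring

lemma integral_quadratic_mul_eq_zero (hyg : W12 y g)
    (hm : ∀ k < 3, ∫ t in (-1 : ℝ)..1, t ^ k * y t = 0) (c₀ c₁ c₂ : ℝ) :
    ∫ t in (-1 : ℝ)..1, (c₀ + c₁ * t + c₂ * t ^ 2) * y t = 0 := by
  have hi (k : ℕ) : IntervalIntegrable (fun t => t ^ k * y t) volume (-1) 1 :=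
    ((continuous_pow k).continuousOn.mul hyg.continuousOn).intervalIntegrable_of_Icc (by norm_num)
  rw [integral_congr (g := fun t => c₀ * (t ^ 0 * y t) + c₁ * (t ^ 1 * y t) + c₂ * (t ^ 2 * y t))
      fun t _ => by ring,
    integral_add (((hi 0).const_mul _).add ((hi 1).const_mul _)) ((hi 2).const_mul _),
    integral_add ((hi 0).const_mul _) ((hi 1).const_mul _), integral_const_mul, integral_const_mul,
    integral_const_mul, hm 0 (by norm_num), hm 1 (by norm_num), hm 2 (by norm_num)]
  ring

theorem eq_integral_mul_evalKernel {x : ℝ} (hx : x ∈ Icc (-1 : ℝ) 1) (hyg : W12 y g)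
    (hm : ∀ k < 3, ∫ t in (-1 : ℝ)..1, t ^ k * y t = 0) :
    y x = ∫ t in (-1 : ℝ)..1, g t * evalKernel x t := by
  have hP := integral_deriv_mul_eq_of_eq_add_primitive (by norm_num) hyg.1 hyg.2.2
    (hasDerivAt_evalKernelPoly x) (by fun_prop)
  rw [hyg.integral_quadratic_mul_eq_zero hm,
    show evalKernelPoly x 1 = 0 by norm_num [evalKernelPoly],
    show evalKernelPoly x (-1) = -1 by norm_num [evalKernelPoly]] at hP
  rw [integral_mul_evalKernel hx hyg.1, hyg.2.2 x hx]
  linarith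

end W12

/-- The additive constant makes `∫ y = 0`; the other two moments vanish by the orthogonality
of `evalKernel x` to `t² - 1` and `t³ - t`. -/
noncomputable def evalExtremal (x t : ℝ) : ℝ :=
  (∫ s in (-1 : ℝ)..1, (s - 1) * evalKernel x s) / 2 + ∫ s in (-1 : ℝ)..t, evalKernel x s

lemma w12_evalExtremal (x : ℝ) : W12 (evalExtremal x) (evalKernel x) :=
  ⟨intervalIntegrable_evalKernel x, intervalIntegrable_evalKernel_sq x,
    fun t _ => by simp [evalExtremal]⟩

lemma integral_pow_mul_evalExtremal {x : ℝ} (hx : x ∈ Icc (-1 : ℝ) 1) :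
    ∀ k < 3, ∫ t in (-1 : ℝ)..1, t ^ k * evalExtremal x t = 0 := by
  intro k hk
  rw [(w12_evalExtremal x).integral_pow_mul k]
  simp only [evalExtremal, integral_same, add_zero]
  rw [integral_mul_evalKernel hx ((by fun_prop : Continuous fun t : ℝ =>
      (t ^ (k + 1) - 1) / (k + 1)).intervalIntegrable _ _),
    integral_mul_evalKernel hx
      ((by fun_prop : Continuous fun t : ℝ => t - 1).intervalIntegrable _ _)]
  -- The two `fun t => t` instances cover integrands that `ring_nf` leaves eta-reduced.
  interval_cases k <;>
  · simp only [evalKernelPoly]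
    ring_nf
    simp (disch := exact (by fun_prop : Continuous _).intervalIntegrable _ _) only [integral_add,
      integral_add (g := fun t => t), integral_mul_const, integral_const_mul,
      integral_const_mul (f := fun t => t), integral_pow, integral_const, integral_id]
    norm_num
    ring

lemma evalExtremal_self {x : ℝ} (hx : x ∈ Icc (-1 : ℝ) 1) : evalExtremal x x =
    (297 + 1260 * x ^ 2 - 5370 * x ^ 4 + 5900 * x ^ 6 - 1575 * x ^ 8) / 3840 := by
  have hK : ∀ t ∈ uIcc (-1) x, evalKernel x t = 1 + evalKernelPoly x t := fun t ht => by
    rw [uIcc_of_le hx.1] at ht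
    simp [evalKernel, ht.2]
  rw [evalExtremal, integral_congr hK,
    integral_mul_evalKernel hx
      ((by fun_prop : Continuous fun t : ℝ => t - 1).intervalIntegrable _ _)]
  simp only [evalKernelPoly]
  ring_nf
  simp (disch := exact (by fun_prop : Continuous _).intervalIntegrable _ _) only [integral_add,
    integral_add (g := fun t => t), integral_mul_const, integral_const_mul,
    integral_const_mul (f := fun t => t), integral_pow, integral_const, integral_id]
  norm_num
  ring

lemma integral_evalKernel_sq {x : ℝ} (hx : x ∈ Icc (-1 : ℝ) 1) :
    ∫ t in (-1 : ℝ)..1, evalKernel x t ^ 2 = evalExtremal x x := by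
  simp_rw [sq]
  exact ((w12_evalExtremal x).eq_integral_mul_evalKernel hx (integral_pow_mul_evalExtremal hx)).symm

lemma sqrt_integral_evalKernel_sq {x : ℝ} (hx : x ∈ Icc (-1 : ℝ) 1) :
    √(∫ t in (-1 : ℝ)..1, evalKernel x t ^ 2) = B3 x := by
  rw [integral_evalKernel_sq hx, evalExtremal_self hx, B3, Real.sqrt_div' _ (by norm_num),
    show (3840 : ℝ) = (16 * √15) ^ 2 by rw [mul_pow, Real.sq_sqrt (by norm_num)]; norm_num,
    Real.sqrt_sq (by positivity)]

lemma B3_pos {x : ℝ} (hx : x ∈ Icc (-1 : ℝ) 1) : 0 < B3 x := by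
  have h0 : 0 ≤ x ^ 2 := sq_nonneg x
  have h1 : x ^ 2 ≤ 1 := by nlinarith [hx.1, hx.2]
  refine div_pos (Real.sqrt_pos.2 ?_) (by positivity)
  nlinarith [mul_nonneg h0 (sub_nonneg.2 h1), mul_nonneg (mul_nonneg h0 h0) (sub_nonneg.2 h1),
    sq_nonneg (x ^ 2 - 2 / 3), sq_nonneg (x ^ 4 - x ^ 2)]

theorem sharp_constant_m3 (x : ℝ) (hx : x ∈ Set.Ioo (-1:ℝ) 1) :
    (∀ y g : ℝ → ℝ, W12 y g →
      (∀ k < 3, (∫ t in (-1:ℝ)..1, t ^ k * y t) = 0) →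
      |y x| ≤ B3 x * Real.sqrt (∫ t in (-1:ℝ)..1, (g t) ^ 2)) ∧
    (∀ B : ℝ,
      (∀ y g : ℝ → ℝ, W12 y g →
        (∀ k < 3, (∫ t in (-1:ℝ)..1, t ^ k * y t) = 0) →
        |y x| ≤ B * Real.sqrt (∫ t in (-1:ℝ)..1, (g t) ^ 2)) →
      B3 x ≤ B) := by
  have hx' := Ioo_subset_Icc_self hx
  refine ⟨fun y g hyg hm => ?_, fun B hB => ?_⟩
  · rw [hyg.eq_integral_mul_evalKernel hx' hm, ← sqrt_integral_evalKernel_sq hx', mul_comm]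
    exact abs_integral_mul_le_sqrt_mul_sqrt (by norm_num) hyg.2.1
      (intervalIntegrable_evalKernel_sq x) (intervalIntegrable_mul_evalKernel x hyg.1)
  · have hext := hB _ _ (w12_evalExtremal x) (integral_pow_mul_evalExtremal hx')
    have hval : evalExtremal x x = B3 x ^ 2 := by
      rw [← sqrt_integral_evalKernel_sq hx', Real.sq_sqrt (integral_nonneg (by norm_num)
        fun t _ => sq_nonneg _), integral_evalKernel_sq hx']
    rw [hval, sqrt_integral_evalKernel_sq hx', abs_of_nonneg (sq_nonneg _), sq] at hext
    exact le_of_mul_le_mul_right hext (B3_pos hx')
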